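/- arXiv:2010.08347 — 2 statements merged into one kernel-verified Lean document; each statement's English description precedes it below -/
import Mathlib

section
/- For an infinite run ρ = s_0 s_1 s_2 ⋯ in a finite directed graph, if there exists N such that all states s_n for n ≥ N belong to a set B, every state of B appears infinitely often in ρ, and B is a bottom SCC of the graph, then for all sufficiently large m the candidate K(s_0 ⋯ s_m) equals B. -/
def StronglyConn {S : Type*} (r : S → S → Prop) (K : Set S) : Prop :=
  K.Nonempty ∧ ∀ s ∈ K, ∀ t ∈ K,
    Relation.ReflTransGen (fun a b => r a b ∧ a ∈ K ∧ b ∈ K) s t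

def IsSCC {S : Type*} (r : S → S → Prop) (K : Set S) : Prop :=
  StronglyConn r K ∧ ∀ K' : Set S, K ⊆ K' → StronglyConn r K' → K' = K

def IsBSCC {S : Type*} (r : S → S → Prop) (K : Set S) : Prop :=
  IsSCC r K ∧ ∀ s ∈ K, ∀ t, r s t → t ∈ K

def ListAdj {V : Type*} (π : List V) (a b : V) : Prop := (a, b) ∈ π.zip π.tail

def Vset {V : Type*} (π : List V) : Set V := {v | v ∈ π}

/-- `B` is the candidate of the finite path `π`: some suffix `κ` of `π` has vertex set `B`,
and its traversed graph is a bottom SCC of the traversed graph of `π`. -/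
def IsCandidate {V : Type*} (π : List V) (B : Set V) : Prop :=
  ∃ κ : List V, κ <:+ π ∧ Vset κ = B ∧ IsBSCC (ListAdj π) B ∧
    StronglyConn (ListAdj κ) (Vset κ)

/-- The prefix `s₀ ⋯ s_m` of a run, as a list. -/
def PrefList {V : Type*} (ρ : ℕ → V) (m : ℕ) : List V := (List.range (m + 1)).map ρ

/-! Once the run is trapped in `B`, has visited every state of `B`, and after that every state
of `B` again, the part of the prefix from position `N` on has vertex set `B` and contains, for all
`s, t ∈ B`, an occurrence of `s` followed by an occurrence of `t`; the stretch of run between them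
is a walk inside `B`, so this suffix is strongly connected on `B`. The traversed graph of the
prefix is a subgraph of `adj`, so `B`, still strongly connected there, stays maximal and bottom. -/

section

variable {V : Type*}

theorem StronglyConn.mono {r r' : V → V → Prop} {K : Set V} (hrr' : r ≤ r')
    (h : StronglyConn r K) : StronglyConn r' K :=
  ⟨h.1, fun s hs t ht =>
    Relation.ReflTransGen.mono (fun _ _ hab => ⟨hrr' _ _ hab.1, hab.2⟩) _ _ (h.2 s hs t ht)⟩

theorem IsBSCC.of_le {r r' : V → V → Prop} {K : Set V} (hrr' : r ≤ r') (hK : IsBSCC r' K)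
    (hconn : StronglyConn r K) : IsBSCC r K :=
  ⟨⟨hconn, fun K' hKK' hK' => hK.1.2 K' hKK' (hK'.mono hrr')⟩,
    fun s hs t hst => hK.2 s hs t (hrr' s t hst)⟩

theorem listAdj_le_of_isSuffix {κ π : List V} (h : κ <:+ π) : ListAdj κ ≤ ListAdj π := by
  obtain ⟨l, rfl⟩ := h
  induction l with
  | nil => exact le_rfl
  | cons a l ih =>
    refine ih.trans fun x y hxy => ?_
    rcases hl : l ++ κ with _ | ⟨b, L⟩
    · simp [ListAdj, hl] at hxy
    · simp_all [ListAdj]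

theorem listAdj_prefList {ρ : ℕ → V} {m : ℕ} {a b : V} :
    ListAdj (PrefList ρ m) a b ↔ ∃ k < m, ρ k = a ∧ ρ (k + 1) = b := by
  simp [ListAdj, PrefList, List.mem_iff_getElem, and_left_comm]

theorem listAdj_prefList_le {ρ : ℕ → V} {adj : V → V → Prop}
    (hpath : ∀ n, adj (ρ n) (ρ (n + 1))) (m : ℕ) : ListAdj (PrefList ρ m) ≤ adj := by
  intro a b hab
  obtain ⟨k, -, rfl, rfl⟩ := listAdj_prefList.1 hab
  exact hpath k

theorem mem_vset_prefList {ρ : ℕ → V} {m : ℕ} {v : V} :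
    v ∈ Vset (PrefList ρ m) ↔ ∃ k ≤ m, ρ k = v := by
  simp [Vset, PrefList]

theorem vset_prefList_eq {σ : ℕ → V} {m : ℕ} {B : Set V} (hσ : ∀ n, σ n ∈ B)
    (hvisit : ∀ s ∈ B, ∃ p ≤ m, σ p = s) : Vset (PrefList σ m) = B := by
  ext v
  rw [mem_vset_prefList]
  exact ⟨fun ⟨k, _, hk⟩ => hk ▸ hσ k, hvisit v⟩

theorem drop_prefList (ρ : ℕ → V) {N m : ℕ} (hNm : N ≤ m) :
    (PrefList ρ m).drop N = PrefList (fun n => ρ (N + n)) (m - N) := by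
  apply List.ext_getElem
  · simp [PrefList]; omega
  · intro i _ _
    simp [PrefList]

theorem stronglyConn_listAdj_prefList {σ : ℕ → V} {m : ℕ} {B : Set V} (hB : B.Nonempty)
    (hσ : ∀ n, σ n ∈ B)
    (hvisit : ∀ s ∈ B, ∀ t ∈ B, ∃ p q, p ≤ q ∧ q ≤ m ∧ σ p = s ∧ σ q = t) :
    StronglyConn (ListAdj (PrefList σ m)) B := by
  refine ⟨hB, fun s hs t ht => ?_⟩
  obtain ⟨p, q, hpq, hqm, rfl, rfl⟩ := hvisit s hs t ht
  refine (reflTransGen_of_succ_of_le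
    (fun i j => ListAdj (PrefList σ m) (σ i) (σ j) ∧ σ i ∈ B ∧ σ j ∈ B) (fun k hk => ?_) hpq).lift
    σ fun _ _ h => h
  exact ⟨listAdj_prefList.2 ⟨k, hk.2.trans_le hqm, rfl, rfl⟩, hσ k, hσ (k + 1)⟩

open Filter in
theorem eventually_visits_in_order {σ : ℕ → V} {B : Set V} (hB : B.Finite)
    (hio : ∀ s ∈ B, ∀ m, ∃ n ≥ m, σ n = s) :
    ∀ᶠ m in atTop, ∀ s ∈ B, ∀ t ∈ B, ∃ p q, p ≤ q ∧ q ≤ m ∧ σ p = s ∧ σ q = t := by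
  refine (eventually_all_finite hB).2 fun s hs => (eventually_all_finite hB).2 fun t ht => ?_
  obtain ⟨p, -, hp⟩ := hio s hs 0
  obtain ⟨q, hpq, hq⟩ := hio t ht p
  exact eventually_atTop.2 ⟨q, fun m hm => ⟨p, q, hpq, hm, hp, hq⟩⟩

end

/-- If a run of a finite directed graph eventually stays in a bottom SCC `B` and visits
every state of `B` infinitely often, then for all sufficiently large `m` the candidate of
the prefix `s₀ ⋯ s_m` equals `B`. -/
theorem stmt7 {V : Type*} [Fintype V] (adj : V → V → Prop) (ρ : ℕ → V)
    (hpath : ∀ n, adj (ρ n) (ρ (n + 1)))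
    (B : Set V) (hB : IsBSCC adj B)
    (N : ℕ) (htrap : ∀ n ≥ N, ρ n ∈ B)
    (hio : ∀ s ∈ B, ∀ m : ℕ, ∃ n ≥ m, ρ n = s) :
    ∃ M : ℕ, ∀ m ≥ M, IsCandidate (PrefList ρ m) B := by
  set σ : ℕ → V := fun n => ρ (N + n)
  have hσB : ∀ n, σ n ∈ B := fun n => htrap _ (Nat.le_add_right N n)
  have hσio : ∀ s ∈ B, ∀ m, ∃ n ≥ m, σ n = s := fun s hs m => by
    obtain ⟨n, hn, rfl⟩ := hio s hs (N + m)
    exact ⟨n - N, by omega, congrArg ρ (by omega)⟩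
  obtain ⟨M, hM⟩ := Filter.eventually_atTop.1 (eventually_visits_in_order B.toFinite hσio)
  refine ⟨N + M, fun m hm => ?_⟩
  have hsuffix : PrefList σ (m - N) <:+ PrefList ρ m :=
    drop_prefList ρ (by omega : N ≤ m) ▸ List.drop_suffix _ _
  have hvisit := hM (m - N) (by omega)
  have hκ := stronglyConn_listAdj_prefList hB.1.1.1 hσB hvisit
  have hVκ : Vset (PrefList σ (m - N)) = B := vset_prefList_eq hσB fun s hs =>
    let ⟨p, _, hpq, hq, hp, _⟩ := hvisit s hs s hs
    ⟨p, hpq.trans hq, hp⟩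
  exact ⟨_, hsuffix, hVκ,
    hB.of_le (listAdj_prefList_le hpath m) (hκ.mono (listAdj_le_of_isSuffix hsuffix)),
    hVκ ▸ hκ⟩
end

section
/- Let π be a finite path in a directed graph. A vertex r is called a root if it has the minimum discovery index in its SCC of G_π. Then the SCCs of G_π, ordered by the discovery indices of their roots, partition the visited vertices into consecutive intervals of discovery indices: for consecutive roots r_i, r_{i+1}, the SCC of r_i is exactly the set of vertices s with d_π(r_i) ≤ d_π(s) < d_π(r_{i+1}). -/
def DIdx {V : Type*} [DecidableEq V] (π : List V) (s : V) : ℕ :=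
  ((π.take (π.idxOf s + 1)).toFinset).card

def SameSCC {V : Type*} (r : V → V → Prop) (a b : V) : Prop :=
  Relation.ReflTransGen r a b ∧ Relation.ReflTransGen r b a

/-- A root of the traversed graph of `π`: a visited vertex of minimum discovery index
in its SCC. -/
def IsRoot {V : Type*} [DecidableEq V] (π : List V) (r : V) : Prop :=
  r ∈ π ∧ ∀ s ∈ π, SameSCC (ListAdj π) r s → DIdx π r ≤ DIdx π s

/-!
Along a path every vertex reaches every vertex discovered after it, by following the path
forward. So a vertex `s` of the SCC of `r` cannot be discovered after `r'`, for otherwise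
`r' → s → r → r'` would put `r'` in the SCC of `r` although `r` is discovered first.
Conversely, if `d r ≤ d s < d r'`, the root `r''` of the SCC of `s` satisfies
`d r'' ≤ d s < d r'`, hence `d r'' ≤ d r` since no root lies strictly between `r` and `r'`;
then `r'' → r → s → r''`.
-/

namespace ListAdj

variable {V : Type*} {π : List V}

theorem getElem_succ {n : ℕ} (hn : n + 1 < π.length) :
    ListAdj π π[n] π[n + 1] :=
  List.mem_iff_getElem.2 ⟨n, by simp; omega, by simp⟩

theorem reflTransGen_getElem {i j : ℕ} (hij : i ≤ j) (hj : j < π.length) :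
    Relation.ReflTransGen (ListAdj π) π[i] π[j] := by
  induction j, hij using Nat.le_induction with
  | base => exact .refl
  | succ n _ ih => exact (ih (by omega)).tail (getElem_succ hj)

theorem reflTransGen_of_idxOf_le [DecidableEq V] {s t : V} (ht : t ∈ π)
    (h : π.idxOf s ≤ π.idxOf t) : Relation.ReflTransGen (ListAdj π) s t := by
  simpa only [List.getElem_idxOf] using
    reflTransGen_getElem h (List.idxOf_lt_length_of_mem ht)

end ListAdj

section DIdx

variable {V : Type*} [DecidableEq V] {π : List V} {s t : V}

theorem DIdx_lt_DIdx_of_idxOf_lt (ht : t ∈ π) (h : π.idxOf s < π.idxOf t) :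
    DIdx π s < DIdx π t := by
  refine Finset.card_lt_card <| (Finset.ssubset_iff_of_subset ?_).2 ⟨t, ?_, ?_⟩
  · exact Multiset.toFinset_subset.2 (List.take_subset_take_left π (by omega))
  · simp [List.mem_take_iff_idxOf_lt ht]
  · simp only [List.mem_toFinset, List.mem_take_iff_idxOf_lt ht, Order.lt_add_one_iff, not_le]
    exact h

theorem idxOf_le_idxOf_of_DIdx_le (hs : s ∈ π) (h : DIdx π s ≤ DIdx π t) :
    π.idxOf s ≤ π.idxOf t :=
  not_lt.1 fun hlt => (DIdx_lt_DIdx_of_idxOf_lt hs hlt).not_ge h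

theorem ListAdj.reflTransGen_of_DIdx_le (hs : s ∈ π) (ht : t ∈ π) (h : DIdx π s ≤ DIdx π t) :
    Relation.ReflTransGen (ListAdj π) s t :=
  ListAdj.reflTransGen_of_idxOf_le ht (idxOf_le_idxOf_of_DIdx_le hs h)

theorem exists_isRoot_sameSCC (hs : s ∈ π) : ∃ r, IsRoot π r ∧ SameSCC (ListAdj π) r s := by
  classical
  obtain ⟨r, hr, hmin⟩ := (π.toFinset.filter (SameSCC (ListAdj π) s)).exists_min_image
    (DIdx π) ⟨s, by simpa using ⟨hs, .refl, .refl⟩⟩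
  simp only [Finset.mem_filter, List.mem_toFinset] at hr hmin
  refine ⟨r, ⟨hr.1, fun t ht hrt => hmin t ⟨ht, hr.2.1.trans hrt.1, hrt.2.trans hr.2.2⟩⟩, hr.2.symm⟩

end DIdx

/-- The SCCs of the graph traversed by a path are contiguous intervals in discovery
order: for consecutive roots `r`, `r'`, the SCC of `r` is exactly the set of visited
vertices with discovery index in `[d(r), d(r'))`. -/
theorem stmt18 {V : Type*} [DecidableEq V] (π : List V)
    (r r' : V) (hr : IsRoot π r) (hr' : IsRoot π r')
    (hlt : DIdx π r < DIdx π r')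
    (hcons : ∀ r'' : V, IsRoot π r'' →
      ¬ (DIdx π r < DIdx π r'' ∧ DIdx π r'' < DIdx π r')) :
    {s | s ∈ π ∧ SameSCC (ListAdj π) r s} =
      {s | s ∈ π ∧ DIdx π r ≤ DIdx π s ∧ DIdx π s < DIdx π r'} := by
  ext s
  refine ⟨fun ⟨hs, hrs⟩ => ⟨hs, hr.2 s hs hrs, ?_⟩, fun ⟨hs, hrs, hsr'⟩ => ⟨hs, ?_⟩⟩
  · by_contra! hr's
    have hr'r : SameSCC (ListAdj π) r' r :=
      ⟨(ListAdj.reflTransGen_of_DIdx_le hr'.1 hs hr's).trans hrs.2,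
        ListAdj.reflTransGen_of_DIdx_le hr.1 hr'.1 hlt.le⟩
    exact (hr'.2 r hr.1 hr'r).not_gt hlt
  · obtain ⟨r'', hr'', hr''s⟩ := exists_isRoot_sameSCC hs
    have hr''r : DIdx π r'' ≤ DIdx π r :=
      not_lt.1 fun h => hcons r'' hr'' ⟨h, (hr''.2 s hs hr''s).trans_lt hsr'⟩
    exact ⟨ListAdj.reflTransGen_of_DIdx_le hr.1 hs hrs,
      hr''s.2.trans (ListAdj.reflTransGen_of_DIdx_le hr''.1 hr.1 hr''r)⟩
end
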